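/- Fix d ≥ 1 and define L₀ : ℝ^d → ℝ̄ by L₀(x) = sup_{y ∈ ℝ^d} ( ⟨x,y⟩ − max_{l ∈ {0,1,…,d}} ( ‖y‖_(l) − l ) ). Then the epigraph of L₀ equals the closed convex hull of the union ⋃_{l=0}^{d} ( B^sp_(l) × [l,+∞) ) in ℝ^d × ℝ, where B^sp_(0) = {0} and, for l ∈ {1,…,d}, B^sp_(l) is the unit ball of the l-support norm. -/

import Mathlib

noncomputable section

variable {d : ℕ}

/-- The projection `x_K` of `x` onto the coordinates in `K`
(the components outside `K` vanish). -/
def restr (K : Finset (Fin d)) (x : EuclideanSpace ℝ (Fin d)) : EuclideanSpace ℝ (Fin d) :=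
  WithLp.toLp 2 (fun i => if i ∈ K then x i else 0)

/-- The 2-k-symmetric gauge norm `‖y‖_(k) = sup {‖y_K‖ : |K| ≤ k}`
(equal to `0` for `k = 0`, by the convention `‖·‖_(0) = 0`). -/
def gaugeNorm (k : ℕ) (y : EuclideanSpace ℝ (Fin d)) : ℝ :=
  ⨆ K : {K : Finset (Fin d) // K.card ≤ k}, ‖restr (K : Finset (Fin d)) y‖

/-- The ℓ₀ pseudonorm: the number of nonzero components. -/
def l0 (x : EuclideanSpace ℝ (Fin d)) : ℕ :=
  (Finset.univ.filter fun i => x i ≠ 0).card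

open Classical in
/-- The Capra coupling `¢(x,y) = ⟨x,y⟩ / ‖x‖` for `x ≠ 0`, and `¢(0,y) = 0`. -/
def capra (x y : EuclideanSpace ℝ (Fin d)) : ℝ :=
  if x = 0 then 0 else (inner ℝ x y : ℝ) / ‖x‖

/-- The Capra conjugate of ℓ₀: `y ↦ max_{0 ≤ l ≤ d} (‖y‖_(l) − l)`. -/
def capraConjL0 (y : EuclideanSpace ℝ (Fin d)) : ℝ :=
  ⨆ l : Fin (d + 1), (gaugeNorm (l : ℕ) y - ((l : ℕ) : ℝ))

/-- `L₀(x) = sup_y (⟨x,y⟩ − max_{0 ≤ l ≤ d}(‖y‖_(l) − l))`, with values in `ℝ̄ = EReal`. -/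
def L0 (x : EuclideanSpace ℝ (Fin d)) : EReal :=
  ⨆ y : EuclideanSpace ℝ (Fin d), (((inner ℝ x y : ℝ) - capraConjL0 y : ℝ) : EReal)

/-- The k-support norm: the dual norm of the 2-k-symmetric gauge norm,
`‖y‖^sp_(k) = sup {⟨x,y⟩ : ‖x‖_(k) ≤ 1}`. -/
def suppNorm (k : ℕ) (y : EuclideanSpace ℝ (Fin d)) : ℝ :=
  sSup {c : ℝ | ∃ x : EuclideanSpace ℝ (Fin d), gaugeNorm k x ≤ 1 ∧ c = (inner ℝ x y : ℝ)}

/-- The unit ball of the k-support norm, with the convention `B^sp_(0) = {0}`. -/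
def Bsp (d k : ℕ) : Set (EuclideanSpace ℝ (Fin d)) :=
  if k = 0 then {0} else {y | suppNorm k y ≤ 1}

/-- The degenerate unit sphere `S_K = {x : x_{−K} = 0 and ‖x_K‖ = 1}`. -/
def sphK (K : Finset (Fin d)) : Set (EuclideanSpace ℝ (Fin d)) :=
  {x | (∀ i, i ∉ K → x i = 0) ∧ ‖restr K x‖ = 1}

/-- The degenerate unit ball `B_K = {x : x_{−K} = 0 and ‖x_K‖ ≤ 1}`. -/
def ballK (K : Finset (Fin d)) : Set (EuclideanSpace ℝ (Fin d)) :=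
  {x | (∀ i, i ∉ K → x i = 0) ∧ ‖restr K x‖ ≤ 1}

/-!
For `l ≥ 1` the `l`-support norm is dual to the 2-`l`-symmetric gauge norm, and
`‖y‖_(l) = sup_{x ∈ B^sp_(l)} ⟨x, y⟩` is attained. Hence `max_l (‖y‖_(l) - l)` is the maximum of
`⟨x, y⟩ - t` over `S = ⋃_l B^sp_(l) × [l, +∞)`, and `L₀(x) ≤ t` says that `(x, t)` lies in every
half-space `⟨·, y⟩ - t ≤ c` containing `S`. By Hahn–Banach, the closed convex hull of `S` is the
intersection of the closed half-spaces `⟨·, y⟩ + s t ≤ u` containing `S`. As `S` is stable under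
increasing `t`, these have `s ≤ 0`; for `s < 0` rescale to `s = -1`, and a vertical one (`s = 0`)
is enforced by the half-spaces in the directions `n y`, `n → ∞`.
-/

open scoped RealInnerProductSpace

section ClosedConvexHull

variable {E : Type*} [NormedAddCommGroup E] [InnerProductSpace ℝ E]

theorem ContinuousLinearMap.exists_eq_inner_add_mul [CompleteSpace E] (f : E × ℝ →L[ℝ] ℝ) :
    ∃ (y : E) (s : ℝ), ∀ q : E × ℝ, f q = ⟪q.1, y⟫ + q.2 * s := by
  refine ⟨(InnerProductSpace.toDual ℝ E).symm (f ∘L .inl ℝ E ℝ), f (0, 1), fun q => ?_⟩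
  have hq : q = (q.1, 0) + q.2 • ((0 : E), (1 : ℝ)) := by ext <;> simp
  conv_lhs => rw [hq]
  rw [map_add, map_smul, real_inner_comm, InnerProductSpace.toDual_symm_apply, smul_eq_mul]
  rfl

theorem isClosed_setOf_forall_inner_sub_le (φ : E → ℝ) :
    IsClosed {p : E × ℝ | ∀ y, ⟪p.1, y⟫ - φ y ≤ p.2} := by
  simp only [Set.ofPred_forall]
  exact isClosed_iInter fun y => isClosed_le (by fun_prop) (by fun_prop)

theorem convex_setOf_forall_inner_sub_le (φ : E → ℝ) :
    Convex ℝ {p : E × ℝ | ∀ y, ⟪p.1, y⟫ - φ y ≤ p.2} := by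
  intro p hp q hq a b ha hb hab y
  simp only [Prod.fst_add, Prod.snd_add, Prod.smul_fst, Prod.smul_snd, inner_add_left,
    real_inner_smul_left, smul_eq_mul]
  linear_combination mul_le_mul_of_nonneg_left (hp y) ha + mul_le_mul_of_nonneg_left (hq y) hb +
    φ y * hab

variable {S : Set (E × ℝ)} {φ : E → ℝ}

theorem le_of_isLUB_image_inner_sub {y : E}
    (hφ : IsLUB ((fun q : E × ℝ => ⟪q.1, y⟫ - q.2) '' S) (φ y))
    {c : ℝ} (h : ∀ q ∈ S, ⟪q.1, y⟫ - q.2 ≤ c) : φ y ≤ c :=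
  hφ.2 (Set.forall_mem_image.2 h)

theorem inner_add_mul_le_of_forall_mem
    (hφ : ∀ y, IsLUB ((fun q : E × ℝ => ⟪q.1, y⟫ - q.2) '' S) (φ y))
    (hup : ∀ x t t', (x, t) ∈ S → t ≤ t' → (x, t') ∈ S)
    {y : E} {s u : ℝ} (hS : ∀ q ∈ S, ⟪q.1, y⟫ + q.2 * s ≤ u)
    {p : E × ℝ} (hp : ∀ z, ⟪p.1, z⟫ - φ z ≤ p.2) :
    ⟪p.1, y⟫ + p.2 * s ≤ u := by
  have hs : s ≤ 0 := by
    by_contra! hs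
    obtain ⟨_, ⟨x, t⟩, hxt, -⟩ := (hφ 0).nonempty
    set t' := max t ((u - ⟪x, y⟫) / s + 1)
    have hle := hS _ (hup x t t' hxt (le_max_left _ _))
    have ht' : (u - ⟪x, y⟫) / s + 1 ≤ t' := le_max_right _ _
    have hlt : u - ⟪x, y⟫ < t' * s := by rw [← div_lt_iff₀ hs]; linarith
    linarith
  rcases hs.lt_or_eq with hs | rfl
  · obtain ⟨b, hb, hbs⟩ : ∃ b : ℝ, 0 ≤ b ∧ b * s = -1 :=
      ⟨(-s)⁻¹, inv_nonneg.2 (neg_nonneg.2 hs.le),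
        by rw [← neg_inv, neg_mul, inv_mul_cancel₀ hs.ne]⟩
    have hscale : φ (b • y) ≤ b * u :=
      le_of_isLUB_image_inner_sub (hφ _) fun q hq => by
        rw [real_inner_smul_right]
        linear_combination mul_le_mul_of_nonneg_left (hS q hq) hb - q.2 * hbs
    have := hp (b • y)
    rw [real_inner_smul_right] at this
    linear_combination mul_le_mul_of_nonneg_left (add_le_add this hscale) (neg_nonneg.2 hs.le) +
      (⟪p.1, y⟫ - u) * hbs
  · by_contra! h
    obtain ⟨n, hn⟩ := exists_lt_nsmul (by linarith : 0 < ⟪p.1, y⟫ - u) (p.2 + φ 0)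
    rw [nsmul_eq_mul] at hn
    have hscale : φ ((n : ℝ) • y) ≤ φ 0 + n * u :=
      le_of_isLUB_image_inner_sub (hφ _) fun q hq => by
        have h0 := (hφ 0).1 (Set.mem_image_of_mem _ hq)
        have := mul_le_mul_of_nonneg_left (hS q hq) n.cast_nonneg
        simp only [inner_zero_right, mul_zero, add_zero] at h0 this
        rw [real_inner_smul_right]
        linarith
    have := hp ((n : ℝ) • y)
    rw [real_inner_smul_right] at this
    linarith

theorem setOf_forall_inner_sub_le_eq_closure_convexHull [CompleteSpace E]
    (hφ : ∀ y, IsLUB ((fun q : E × ℝ => ⟪q.1, y⟫ - q.2) '' S) (φ y))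
    (hup : ∀ x t t', (x, t) ∈ S → t ≤ t' → (x, t') ∈ S) :
    {p : E × ℝ | ∀ y, ⟪p.1, y⟫ - φ y ≤ p.2} = closure (convexHull ℝ S) := by
  refine Set.Subset.antisymm (fun p hp => ?_) ?_
  · by_contra hp'
    obtain ⟨f, u, hfu, hpu⟩ :=
      geometric_hahn_banach_closed_point (convex_convexHull ℝ S).closure isClosed_closure hp'
    obtain ⟨y, s, hf⟩ := f.exists_eq_inner_add_mul
    have := inner_add_mul_le_of_forall_mem hφ hup (y := y) (s := s) (u := u)
      (fun q hq => hf q ▸ (hfu q (subset_closure (subset_convexHull ℝ S hq))).le) hp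
    linarith [hf p]
  · refine closure_minimal (convexHull_min (fun q hq y => ?_) (convex_setOf_forall_inner_sub_le φ))
      (isClosed_setOf_forall_inner_sub_le φ)
    linarith [(hφ y).1 (Set.mem_image_of_mem _ hq)]

end ClosedConvexHull

section GaugeNorm

variable {k : ℕ}

instance (k : ℕ) : Nonempty {K : Finset (Fin d) // K.card ≤ k} := ⟨⟨∅, by simp⟩⟩

theorem restr_smul (K : Finset (Fin d)) (c : ℝ) (y : EuclideanSpace ℝ (Fin d)) :
    restr K (c • y) = c • restr K y := by
  ext i
  simp [restr, mul_ite]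

theorem inner_restr_right (K : Finset (Fin d)) (z y : EuclideanSpace ℝ (Fin d)) :
    ⟪z, restr K y⟫ = ⟪restr K z, restr K y⟫ := by
  simp only [PiLp.inner_apply, RCLike.inner_apply, conj_trivial]
  refine Finset.sum_congr rfl fun i _ => ?_
  by_cases h : i ∈ K <;> simp [restr, h]

theorem norm_restr_le_gaugeNorm {K : Finset (Fin d)} (hK : K.card ≤ k)
    (y : EuclideanSpace ℝ (Fin d)) : ‖restr K y‖ ≤ gaugeNorm k y :=
  le_ciSup (f := fun K : {K : Finset (Fin d) // K.card ≤ k} => ‖restr (K : Finset (Fin d)) y‖)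
    (Set.finite_range _).bddAbove ⟨K, hK⟩

theorem exists_norm_restr_eq_gaugeNorm (k : ℕ) (y : EuclideanSpace ℝ (Fin d)) :
    ∃ K : Finset (Fin d), K.card ≤ k ∧ ‖restr K y‖ = gaugeNorm k y := by
  obtain ⟨⟨K, hK⟩, h⟩ := exists_eq_ciSup_of_finite
    (f := fun K : {K : Finset (Fin d) // K.card ≤ k} => ‖restr (K : Finset (Fin d)) y‖)
  exact ⟨K, hK, h⟩

theorem gaugeNorm_nonneg (k : ℕ) (y : EuclideanSpace ℝ (Fin d)) : 0 ≤ gaugeNorm k y :=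
  (norm_nonneg _).trans (norm_restr_le_gaugeNorm (K := ∅) (Nat.zero_le k) y)

theorem gaugeNorm_zero_left (y : EuclideanSpace ℝ (Fin d)) : gaugeNorm 0 y = 0 := by
  obtain ⟨K, hK, h⟩ := exists_norm_restr_eq_gaugeNorm 0 y
  rw [← h, Finset.card_eq_zero.1 (Nat.le_zero.1 hK), norm_eq_zero]
  ext i
  simp [restr]

theorem gaugeNorm_smul (c : ℝ) (y : EuclideanSpace ℝ (Fin d)) :
    gaugeNorm k (c • y) = |c| * gaugeNorm k y := by
  obtain ⟨K, hK, hy⟩ := exists_norm_restr_eq_gaugeNorm k y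
  refine le_antisymm (ciSup_le fun K => ?_) ?_
  · rw [restr_smul, norm_smul, Real.norm_eq_abs]
    exact mul_le_mul_of_nonneg_left (norm_restr_le_gaugeNorm K.2 y) (abs_nonneg c)
  · rw [← hy, ← Real.norm_eq_abs, ← norm_smul, ← restr_smul]
    exact norm_restr_le_gaugeNorm hK _

theorem abs_apply_le_gaugeNorm (hk : k ≠ 0) (y : EuclideanSpace ℝ (Fin d)) (i : Fin d) :
    |y i| ≤ gaugeNorm k y := by
  have hi : ({i} : Finset (Fin d)).card ≤ k := by simpa using Nat.one_le_iff_ne_zero.2 hk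
  refine le_trans ?_ (norm_restr_le_gaugeNorm hi y)
  simpa [restr] using PiLp.norm_apply_le (restr {i} y) i

theorem eq_zero_of_gaugeNorm_eq_zero (hk : k ≠ 0) {y : EuclideanSpace ℝ (Fin d)}
    (hy : gaugeNorm k y = 0) : y = 0 := by
  ext i
  simpa using (abs_apply_le_gaugeNorm hk y i).trans hy.le

theorem norm_le_of_gaugeNorm_le_one (hk : k ≠ 0) {z : EuclideanSpace ℝ (Fin d)}
    (hz : gaugeNorm k z ≤ 1) : ‖z‖ ≤ √d := by
  rw [EuclideanSpace.norm_eq]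
  refine Real.sqrt_le_sqrt ?_
  calc ∑ i, ‖z i‖ ^ 2 ≤ ∑ _i : Fin d, (1 : ℝ) := Finset.sum_le_sum fun i _ => by
        rw [Real.norm_eq_abs, sq_abs]
        nlinarith [abs_nonneg (z i), (abs_apply_le_gaugeNorm hk z i).trans hz, sq_abs (z i)]
    _ = d := by simp

theorem bddAbove_inner_of_gaugeNorm_le_one (hk : k ≠ 0) (y : EuclideanSpace ℝ (Fin d)) :
    BddAbove {c : ℝ | ∃ x : EuclideanSpace ℝ (Fin d), gaugeNorm k x ≤ 1 ∧ c = ⟪x, y⟫} := by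
  refine ⟨√d * ‖y‖, ?_⟩
  rintro _ ⟨x, hx, rfl⟩
  exact (real_inner_le_norm x y).trans
    (mul_le_mul_of_nonneg_right (norm_le_of_gaugeNorm_le_one hk hx) (norm_nonneg y))

end GaugeNorm

section SupportNorm

variable {l : ℕ}

theorem Bsp_zero : Bsp d 0 = {0} := if_pos rfl

theorem Bsp_of_ne_zero (hl : l ≠ 0) : Bsp d l = {y | suppNorm l y ≤ 1} := if_neg hl

theorem inner_le_gaugeNorm_of_mem_Bsp {x : EuclideanSpace ℝ (Fin d)} (hx : x ∈ Bsp d l)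
    (y : EuclideanSpace ℝ (Fin d)) : ⟪x, y⟫ ≤ gaugeNorm l y := by
  rcases eq_or_ne l 0 with rfl | hl
  · rw [Bsp_zero, Set.mem_singleton_iff] at hx
    rw [hx, inner_zero_left]
    exact gaugeNorm_nonneg 0 y
  rw [Bsp_of_ne_zero hl] at hx
  rcases (gaugeNorm_nonneg l y).eq_or_lt with hy | hy
  · rw [← hy, eq_zero_of_gaugeNorm_eq_zero hl hy.symm, inner_zero_right]
  have hz : gaugeNorm l ((gaugeNorm l y)⁻¹ • y) ≤ 1 := by
    rw [gaugeNorm_smul, abs_inv, abs_of_pos hy, inv_mul_cancel₀ hy.ne']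
  have := (le_csSup (bddAbove_inner_of_gaugeNorm_le_one hl x) ⟨_, hz, rfl⟩).trans hx
  rwa [real_inner_smul_left, real_inner_comm, inv_mul_le_iff₀ hy, mul_one] at this

theorem exists_mem_Bsp_inner_eq_gaugeNorm (l : ℕ) (y : EuclideanSpace ℝ (Fin d)) :
    ∃ x ∈ Bsp d l, ⟪x, y⟫ = gaugeNorm l y := by
  rcases eq_or_ne l 0 with rfl | hl
  · exact ⟨0, by simp [Bsp_zero], by simp [gaugeNorm_zero_left]⟩
  obtain ⟨K, hK, hy⟩ := exists_norm_restr_eq_gaugeNorm l y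
  set r := restr K y
  refine ⟨‖r‖⁻¹ • r, ?_, ?_⟩
  · rw [Bsp_of_ne_zero hl]
    refine Real.sSup_le ?_ zero_le_one
    rintro _ ⟨z, hz, rfl⟩
    calc ⟪z, ‖r‖⁻¹ • r⟫ = ‖r‖⁻¹ * ⟪restr K z, r⟫ := by
          rw [real_inner_smul_right, inner_restr_right]
      _ ≤ ‖r‖⁻¹ * (‖restr K z‖ * ‖r‖) := by gcongr; exact real_inner_le_norm _ _
      _ = ‖restr K z‖ * (‖r‖⁻¹ * ‖r‖) := by ring
      _ ≤ ‖restr K z‖ := mul_le_of_le_one_right (norm_nonneg _) inv_mul_le_one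
      _ ≤ 1 := (norm_restr_le_gaugeNorm hK z).trans hz
  · rw [real_inner_smul_left, real_inner_comm, inner_restr_right, real_inner_self_eq_norm_sq, sq,
      ← mul_assoc, inv_mul_mul_self, hy]

end SupportNorm

theorem mem_iUnion_Bsp_prod_Ici {x : EuclideanSpace ℝ (Fin d)} {t : ℝ} :
    (x, t) ∈ ⋃ l ∈ Set.Iic d, Bsp d l ×ˢ Set.Ici (l : ℝ) ↔
      ∃ l ≤ d, x ∈ Bsp d l ∧ (l : ℝ) ≤ t := by
  simp only [Set.mem_iUnion, Set.mem_prod, Set.mem_Iic, Set.mem_Ici, exists_prop]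

theorem isGreatest_capraConjL0 (y : EuclideanSpace ℝ (Fin d)) :
    IsGreatest ((fun q : EuclideanSpace ℝ (Fin d) × ℝ => ⟪q.1, y⟫ - q.2) ''
      ⋃ l ∈ Set.Iic d, Bsp d l ×ˢ Set.Ici (l : ℝ)) (capraConjL0 y) := by
  constructor
  · obtain ⟨l, hl⟩ := exists_eq_ciSup_of_finite (f := fun l : Fin (d + 1) => gaugeNorm l y - l)
    obtain ⟨x, hx, hxy⟩ := exists_mem_Bsp_inner_eq_gaugeNorm l y
    refine ⟨(x, l), mem_iUnion_Bsp_prod_Ici.2 ⟨l, Nat.lt_succ_iff.1 l.2, hx, le_rfl⟩, ?_⟩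
    simp only [hxy, capraConjL0, hl]
  · rintro _ ⟨⟨x, t⟩, hxt, rfl⟩
    obtain ⟨l, hl, hx, ht⟩ := mem_iUnion_Bsp_prod_Ici.1 hxt
    calc ⟪x, y⟫ - t ≤ gaugeNorm l y - l := sub_le_sub (inner_le_gaugeNorm_of_mem_Bsp hx y) ht
      _ ≤ capraConjL0 y :=
        le_ciSup (f := fun l : Fin (d + 1) => gaugeNorm l y - l) (Set.finite_range _).bddAbove
          ⟨l, Nat.lt_succ_of_le hl⟩

theorem L0_le_coe_iff (x : EuclideanSpace ℝ (Fin d)) (t : ℝ) :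
    L0 x ≤ t ↔ ∀ y, ⟪x, y⟫ - capraConjL0 y ≤ t := by
  simp only [L0, iSup_le_iff, EReal.coe_le_coe_iff]

theorem L0_epigraph_general (d : ℕ) :
    {p : EuclideanSpace ℝ (Fin d) × ℝ | L0 p.1 ≤ (p.2 : EReal)} =
      closure (convexHull ℝ
        (⋃ l ∈ Set.Iic d, Bsp d l ×ˢ Set.Ici (l : ℝ))) := by
  simp only [L0_le_coe_iff]
  refine setOf_forall_inner_sub_le_eq_closure_convexHull
    (fun y => (isGreatest_capraConjL0 y).isLUB) fun x t t' hxt htt' => ?_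
  obtain ⟨l, hl, hx, ht⟩ := mem_iUnion_Bsp_prod_Ici.1 hxt
  exact mem_iUnion_Bsp_prod_Ici.2 ⟨l, hl, hx, ht.trans htt'⟩

/-- the epigraph of `L₀` equals the closed convex hull of
`⋃_{l=0}^{d} (B^sp_(l) × [l, +∞))` in `ℝ^d × ℝ`, where `B^sp_(0) = {0}` and `B^sp_(l)`
is the unit ball of the l-support norm for `1 ≤ l ≤ d`. -/
theorem L0_epigraph (d : ℕ) (hd : 1 ≤ d) :
    {p : EuclideanSpace ℝ (Fin d) × ℝ | L0 p.1 ≤ (p.2 : EReal)} =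
      closure (convexHull ℝ
        (⋃ l ∈ Set.Iic d, Bsp d l ×ˢ Set.Ici (l : ℝ))) :=
  L0_epigraph_general d
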